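/- arXiv:1010.4212 — 2 statements merged into one kernel-verified Lean document; each statement's English description precedes it below -/
import Mathlib

section
/- Let M be a countable Urysohn space with finite distance set D, A a finite subset of M, and p₀, p₁, p₂ three Katětov functions with domain A. Then the triple (p₀, p₁, p₂) satisfies the triangle inequality under d_min: d_min(p₀,p₁) + d_min(p₀,p₂) ≥ d_min(p₁,p₂). -/
/-!
A Katětov function `t` over a Urysohn space is realized: embed the one-point extension of `t.dom`
into `M` and pull it back onto `t.dom` by homogeneity. Any two realizations of `t` are exchanged
by an isometry of `M` fixing `t.dom` pointwise. Since `D` is finite the two minima `d_min(p₀, p₁)`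
and `d_min(p₀, p₂)` are attained, say at `(a, b)` and `(a', c)`. An isometry `g` fixing `A` with
`g a' = a` keeps `g c` in the orbit of `p₂`, and the triangle inequality for `b, a, g c` gives the
claim.
-/

namespace Sauer

def IsMetricTriple (a b c : ℝ) : Prop := a ≤ b + c ∧ b ≤ a + c ∧ c ≤ a + b

def IsUniversalDist (D : Set ℝ) : Prop :=
  D.Finite ∧ (0 : ℝ) ∈ D ∧ (∀ d ∈ D, 0 ≤ d) ∧
    ∀ s x₀ y₀ x₁ y₁ : ℝ, s ∈ D → x₀ ∈ D → y₀ ∈ D → x₁ ∈ D → y₁ ∈ D →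
      0 < x₀ → 0 < y₀ → 0 < x₁ → 0 < y₁ →
      IsMetricTriple x₀ y₀ s → IsMetricTriple x₁ y₁ s →
      ∃ t ∈ D, 0 < t ∧ IsMetricTriple x₀ x₁ t ∧ IsMetricTriple y₀ y₁ t

open Classical in
noncomputable def dsucc (D : Set ℝ) (r : ℝ) : ℝ :=
  if ({s | s ∈ D ∧ r < s}).Nonempty then sInf {s | s ∈ D ∧ r < s} else r

noncomputable def dpred (D : Set ℝ) (r : ℝ) : ℝ := sSup {s | s ∈ D ∧ s < r}

def IsBlock (D B : Set ℝ) : Prop :=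
  ∃ (n : ℕ) (b : ℕ → ℝ),
    B = {x | ∃ i, i ≤ n ∧ x = b i} ∧
    (∀ i ≤ n, b i ∈ D) ∧ 0 < b 0 ∧
    (∀ i < n, b i < b (i + 1)) ∧
    (∀ y ∈ D, y < b 0 → 2 * y < b 0) ∧
    (∀ i < n, b (i + 1) = dsucc D (b i)) ∧
    (∀ i < n, b (i + 1) ≤ b i + b 0)

def IsJump (D : Set ℝ) (r : ℝ) : Prop := r ∈ D ∧ ∀ s ∈ D, r < s → 2 * r < s

structure Katetov (D : Set ℝ) (M : Type) [MetricSpace M] where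
  dom : Finset M
  f : M → ℝ
  mem : ∀ x ∈ dom, f x ∈ D
  pos : ∀ x ∈ dom, 0 < f x
  ineq1 : ∀ x ∈ dom, ∀ y ∈ dom, |f x - f y| ≤ dist x y
  ineq2 : ∀ x ∈ dom, ∀ y ∈ dom, dist x y ≤ f x + f y

variable {D : Set ℝ} {M : Type} [MetricSpace M]

def orb (t : Katetov D M) : Set M :=
  {y | y ∉ t.dom ∧ ∀ x ∈ t.dom, dist y x = t.f x}

noncomputable def rank (t : Katetov D M) : ℝ := sInf (t.f '' ↑t.dom)

def orbDistSet (s t : Katetov D M) : Set ℝ :=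
  {m | ∃ x ∈ orb s, ∃ y ∈ orb t, dist x y = m}

noncomputable def dminK (s t : Katetov D M) : ℝ := sInf (orbDistSet s t)

noncomputable def dmin (A B : Set M) : ℝ := sInf {d | ∃ x ∈ A, ∃ y ∈ B, dist x y = d}

def IsHomogeneous (M : Type) [MetricSpace M] : Prop :=
  ∀ (A : Finset M) (f : M → M),
    (∀ x ∈ A, ∀ y ∈ A, dist (f x) (f y) = dist x y) →
    ∃ g : M ≃ᵢ M, ∀ x ∈ A, g x = f x

def IsUrysohn (D : Set ℝ) (M : Type) [MetricSpace M] : Prop :=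
  Countable M ∧ (∀ x y : M, dist x y ∈ D) ∧ IsHomogeneous M ∧
    ∀ (N : Type) [MetricSpace N], Finite N → (∀ x y : N, dist x y ∈ D) →
      ∃ f : N → M, Isometry f

namespace Katetov

def extDist (t : Katetov D M) : Option t.dom → Option t.dom → ℝ
  | some a, some b => dist (a : M) b
  | some a, none | none, some a => t.f a
  | none, none => 0

/-- `t.dom` together with a new point `none` realizing `t`. -/
@[reducible] noncomputable def oneExtension (t : Katetov D M) : MetricSpace (Option t.dom) where
  dist := extDist t
  dist_self := by rintro (_ | a) <;> simp [extDist]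
  dist_comm := by rintro (_ | a) (_ | b) <;> simp [extDist, dist_comm]
  dist_triangle := by
    rintro (_ | a) (_ | b) (_ | c) <;> simp only [extDist]
    · simp
    · simp
    · linarith [t.pos b b.2]
    · linarith [(abs_le.1 (t.ineq1 c c.2 b b.2)).2, dist_comm (c : M) b]
    · simp
    · exact t.ineq2 a a.2 c c.2
    · linarith [(abs_le.1 (t.ineq1 a a.2 b b.2)).2]
    · exact dist_triangle (a : M) b c
  eq_of_dist_eq_zero := by
    rintro (_ | a) (_ | b) h
    · rfl
    · exact absurd h.symm (t.pos b b.2).ne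
    · exact absurd h.symm (t.pos a a.2).ne
    · exact congrArg some (Subtype.ext (dist_eq_zero.1 h))

end Katetov

theorem mem_orb_iff {t : Katetov D M} {y : M} :
    y ∈ orb t ↔ ∀ x ∈ t.dom, dist y x = t.f x :=
  ⟨And.right, fun hy => ⟨fun h => (t.pos y h).ne' (by simpa using (hy y h).symm), hy⟩⟩

theorem orb_nonempty (hM : IsUrysohn D M) (hD0 : (0 : ℝ) ∈ D) (t : Katetov D M) :
    (orb t).Nonempty := by
  classical
  obtain ⟨-, hdistD, hhom, hext⟩ := hM
  let _ := t.oneExtension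
  obtain ⟨φ, hφ⟩ := hext (Option t.dom) inferInstance (by
    rintro (_ | a) (_ | b)
    exacts [hD0, t.mem b b.2, t.mem a a.2, hdistD a b])
  -- `g` carries `t.dom` onto its copy inside `φ`'s image, so `g⁻¹ (φ none)` realizes `t`.
  obtain ⟨g, hg⟩ := hhom t.dom (fun x => if hx : x ∈ t.dom then φ (some ⟨x, hx⟩) else x) (by
    intro x hx y hy
    simp only [hx, hy, dite_true, hφ.dist_eq]
    rfl)
  refine ⟨g.symm (φ none), mem_orb_iff.2 fun x hx => ?_⟩
  calc dist (g.symm (φ none)) x = dist (φ none) (φ (some ⟨x, hx⟩)) := by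
        rw [← g.dist_eq, g.apply_symm_apply, hg x hx, dif_pos hx]
    _ = t.f x := hφ.dist_eq _ _

theorem isometryEquiv_apply_mem_orb {t : Katetov D M} {g : M ≃ᵢ M}
    (hg : ∀ x ∈ t.dom, g x = x) {y : M} (hy : y ∈ orb t) : g y ∈ orb t :=
  mem_orb_iff.2 fun x hx => by rw [← hy.2 x hx, ← g.dist_eq y x, hg x hx]

theorem exists_isometryEquiv_apply_eq_of_mem_orb (hM : IsHomogeneous M) {t : Katetov D M}
    {a a' : M} (ha : a ∈ orb t) (ha' : a' ∈ orb t) :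
    ∃ g : M ≃ᵢ M, g a' = a ∧ ∀ x ∈ t.dom, g x = x := by
  classical
  have hfix : ∀ x ∈ t.dom, Function.update id a' a x = x := fun x hx =>
    Function.update_of_ne (by rintro rfl; exact ha'.1 hx) _ _
  obtain ⟨g, hg⟩ := hM (insert a' t.dom) (Function.update id a' a) (by
    simp only [Finset.mem_insert]
    rintro x (rfl | hx) y (rfl | hy)
    · simp
    · rw [Function.update_self, hfix y hy, ha.2 y hy, ha'.2 y hy]
    · rw [Function.update_self, hfix x hx, dist_comm, ha.2 x hx, dist_comm, ha'.2 x hx]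
    · rw [hfix x hx, hfix y hy])
  refine ⟨g, by simp [hg a' (Finset.mem_insert_self _ _)], fun x hx => ?_⟩
  rw [hg x (Finset.mem_insert_of_mem hx), hfix x hx]

theorem dminK_le_dist {s t : Katetov D M} {x y : M} (hx : x ∈ orb s) (hy : y ∈ orb t) :
    dminK s t ≤ dist x y := by
  have hbdd : BddBelow (orbDistSet s t) :=
    ⟨0, by rintro _ ⟨_, -, _, -, rfl⟩; exact dist_nonneg⟩
  exact csInf_le hbdd ⟨x, hx, y, hy, rfl⟩

theorem exists_dist_eq_dminK (hD : D.Finite) (hdistD : ∀ x y : M, dist x y ∈ D)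
    {s t : Katetov D M} (hs : (orb s).Nonempty) (ht : (orb t).Nonempty) :
    ∃ x ∈ orb s, ∃ y ∈ orb t, dist x y = dminK s t :=
  Set.Nonempty.csInf_mem (s := orbDistSet s t)
    ⟨_, hs.some, hs.some_mem, ht.some, ht.some_mem, rfl⟩
    (hD.subset (by rintro _ ⟨x, -, y, -, rfl⟩; exact hdistD x y))

theorem dminK_le_dminK_add_dminK (hM : IsUrysohn D M) (hD : D.Finite) (hD0 : (0 : ℝ) ∈ D)
    {s t u : Katetov D M} (hsu : s.dom = u.dom) : dminK t u ≤ dminK s t + dminK s u := by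
  obtain ⟨a, ha, b, hb, hab⟩ := exists_dist_eq_dminK hD hM.2.1
    (orb_nonempty hM hD0 s) (orb_nonempty hM hD0 t)
  obtain ⟨a', ha', c, hc, hac⟩ := exists_dist_eq_dminK hD hM.2.1
    (orb_nonempty hM hD0 s) (orb_nonempty hM hD0 u)
  obtain ⟨g, hga, hg⟩ := exists_isometryEquiv_apply_eq_of_mem_orb hM.2.2.1 ha ha'
  calc dminK t u ≤ dist b (g c) := dminK_le_dist hb (isometryEquiv_apply_mem_orb (hsu ▸ hg) hc)
    _ ≤ dist b a + dist a (g c) := dist_triangle _ _ _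
    _ = dminK s t + dminK s u := by rw [dist_comm, hab, ← hga, g.dist_eq, hac]

theorem statement13_general (D : Set ℝ) (hD : IsUniversalDist D) (M : Type) [MetricSpace M]
    (hM : IsUrysohn D M) (A : Finset M) (p₀ p₁ p₂ : Katetov D M)
    (h0 : p₀.dom = A) (h2 : p₂.dom = A) :
    dminK p₁ p₂ ≤ dminK p₀ p₁ + dminK p₀ p₂ :=
  dminK_le_dminK_add_dminK hM hD.1 hD.2.1 (h0.trans h2.symm)

theorem statement13 (D : Set ℝ) (hD : IsUniversalDist D) (M : Type) [MetricSpace M]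
    (hM : IsUrysohn D M) (A : Finset M) (p₀ p₁ p₂ : Katetov D M)
    (h0 : p₀.dom = A) (h1 : p₁.dom = A) (h2 : p₂.dom = A) :
    dminK p₁ p₂ ≤ dminK p₀ p₁ + dminK p₀ p₂ :=
  statement13_general D hD M hM A p₀ p₁ p₂ h0 h2

end Sauer
end

section
/- Let M be a countable Urysohn space with finite universal distance set D whose first block has minimum 1, A ⊆ M finite, and s, t Katětov functions with domain A with rank(s) ≥ r⁻ and rank(t) ≥ 1, where r ∈ D lies in the first block B of D with 1 ≤ r⁻ < r (r⁻ the predecessor of r in D). Then d_max(s,t) ≥ r, i.e., there exist x ∈ orb(s) and y ∈ orb(t) with d(x,y) ≥ r. -/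
/-!
If `r` lies in the first block of `D`, then `r ≤ r⁻ + 1`, so the rank bounds give
`r ≤ s(a) + t(a)` on `A`. Universality of `D`, applied at a point maximising `|s - t|` and a
point minimising `s + t`, yields `d ∈ D` with `|s(a) - t(a)| ≤ d ≤ s(a) + t(a)` for all `a ∈ A`;
raising `d` to `max d r` keeps this. Such a `d` is realised in `M` by two successive one-point
(Katětov) extensions: first `x ∈ orb s`, then a point of `orb t` at distance `d` from `x`.
-/

namespace Sauer

variable {D : Set ℝ} {M : Type} [MetricSpace M]

section OnePointExtension

variable {X : Type*} [MetricSpace X]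

structure IsKatetovFun (f : X → ℝ) : Prop where
  pos : ∀ x, 0 < f x
  abs_sub_le : ∀ x y, |f x - f y| ≤ dist x y
  dist_le : ∀ x y, dist x y ≤ f x + f y

def extendDist (f : X → ℝ) : Option X → Option X → ℝ
  | none, none => 0
  | none, some x => f x
  | some x, none => f x
  | some x, some y => dist x y

abbrev IsKatetovFun.metricSpace {f : X → ℝ} (hf : IsKatetovFun f) : MetricSpace (Option X) where
  dist := extendDist f
  dist_self := by rintro (_ | x) <;> simp [extendDist]
  dist_comm := by rintro (_ | x) (_ | y) <;> simp [extendDist, dist_comm]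
  dist_triangle := by
    rintro (_ | x) (_ | y) (_ | z) <;> simp only [extendDist]
    · simp
    · linarith
    · linarith [hf.pos y]
    · linarith [(abs_le.1 (hf.abs_sub_le z y)).2, dist_comm z y]
    · linarith
    · exact hf.dist_le x z
    · linarith [(abs_le.1 (hf.abs_sub_le x y)).2]
    · exact dist_triangle x y z
  eq_of_dist_eq_zero := by
    rintro (_ | x) (_ | y) h <;> simp only [extendDist] at h
    · rfl
    · exact absurd h (hf.pos y).ne'
    · exact absurd h (hf.pos x).ne'
    · rw [dist_eq_zero.1 h]

theorem extendDist_mem {D : Set ℝ} {f : X → ℝ} (h0 : (0 : ℝ) ∈ D) (hf : ∀ x, f x ∈ D)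
    (hX : ∀ x y : X, dist x y ∈ D) : ∀ p q, extendDist f p q ∈ D := by
  rintro (_ | x) (_ | y)
  exacts [h0, hf y, hf x, hX x y]

end OnePointExtension

theorem IsUrysohn.exists_isometry_extend (hM : IsUrysohn D M) {N : Type} [MetricSpace N]
    [Finite N] (hN : ∀ x y : N, dist x y ∈ D) {α : Type*} [Fintype α] (ι : α → N) (φ : α → M)
    (hιφ : ∀ a b, dist (φ a) (φ b) = dist (ι a) (ι b)) :
    ∃ e : N → M, Isometry e ∧ ∀ a, e (ι a) = φ a := by
  classical
  obtain ⟨e₀, he₀⟩ := hM.2.2.2 N ‹_› hN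
  have hfac : φ.FactorsThrough (e₀ ∘ ι) := fun a b hab =>
    dist_eq_zero.1 <| by rw [hιφ, ← he₀.dist_eq]; exact dist_eq_zero.2 hab
  obtain ⟨g, hg⟩ := hM.2.2.1 (Finset.univ.image (e₀ ∘ ι)) (Function.extend (e₀ ∘ ι) φ id) <| by
    simp only [Finset.mem_image, Finset.mem_univ, true_and]
    rintro _ ⟨a, rfl⟩ _ ⟨b, rfl⟩
    rw [hfac.extend_apply, hfac.extend_apply, hιφ, Function.comp_apply, Function.comp_apply,
      he₀.dist_eq]
  refine ⟨g ∘ e₀, g.isometry.comp he₀, fun a => ?_⟩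
  exact (hg _ (Finset.mem_image_of_mem _ (Finset.mem_univ a))).trans (hfac.extend_apply id a)

namespace Katetov

theorem rank_le (t : Katetov D M) {x : M} (hx : x ∈ t.dom) : rank t ≤ t.f x :=
  csInf_le (t.dom.finite_toSet.image _).bddBelow ⟨x, hx, rfl⟩

theorem isMetricTriple (t : Katetov D M) {x y : M} (hx : x ∈ t.dom) (hy : y ∈ t.dom) :
    IsMetricTriple (t.f x) (t.f y) (dist x y) := by
  obtain ⟨h₁, h₂⟩ := abs_le.1 (t.ineq1 x hx y hy)
  exact ⟨by linarith, by linarith, t.ineq2 x hx y hy⟩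

theorem isKatetovFun (t : Katetov D M) : IsKatetovFun fun a : {a // a ∈ t.dom} => t.f a where
  pos a := t.pos a a.2
  abs_sub_le a b := t.ineq1 a a.2 b b.2
  dist_le a b := t.ineq2 a a.2 b b.2

theorem orb_nonempty (hM : IsUrysohn D M) (h0 : (0 : ℝ) ∈ D) (t : Katetov D M) :
    (orb t).Nonempty := by
  let _ : MetricSpace (Option {a // a ∈ t.dom}) := t.isKatetovFun.metricSpace
  obtain ⟨e, he, hext⟩ := hM.exists_isometry_extend
    (extendDist_mem h0 (fun a : {a // a ∈ t.dom} => t.mem a a.2) fun a b => hM.2.1 a b)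
    (some : {a // a ∈ t.dom} → _) Subtype.val fun _ _ => rfl
  refine ⟨e none, fun hmem => ?_, fun a ha => ?_⟩
  · exact Option.some_ne_none _ (he.injective ((hext ⟨_, hmem⟩).trans rfl))
  · calc dist (e none) a = dist (e none) (e (some ⟨a, ha⟩)) := by rw [hext]
      _ = t.f a := he.dist_eq _ _

open Classical in
noncomputable def insert (t : Katetov D M) (x : M) (d : ℝ) (hdD : d ∈ D) (hd : 0 < d)
    (hx : ∀ a ∈ t.dom, |t.f a - d| ≤ dist a x ∧ dist a x ≤ t.f a + d) : Katetov D M where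
  dom := Insert.insert x t.dom
  f := Function.update t.f x d
  mem a ha := by
    by_cases hax : a = x
    · simpa [hax] using hdD
    · simpa [hax] using t.mem a ((Finset.mem_insert.1 ha).resolve_left hax)
  pos a ha := by
    by_cases hax : a = x
    · simpa [hax] using hd
    · simpa [hax] using t.pos a ((Finset.mem_insert.1 ha).resolve_left hax)
  ineq1 a ha b hb := by
    have ha' := Finset.mem_insert.1 ha
    have hb' := Finset.mem_insert.1 hb
    by_cases hax : a = x <;> by_cases hbx : b = x
    · simp [hax, hbx]
    · subst hax; simpa [hbx, abs_sub_comm, dist_comm] using (hx b (hb'.resolve_left hbx)).1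
    · subst hbx; simpa [hax] using (hx a (ha'.resolve_left hax)).1
    · simpa [hax, hbx] using t.ineq1 a (ha'.resolve_left hax) b (hb'.resolve_left hbx)
  ineq2 a ha b hb := by
    have ha' := Finset.mem_insert.1 ha
    have hb' := Finset.mem_insert.1 hb
    by_cases hax : a = x <;> by_cases hbx : b = x
    · simp only [hax, hbx, dist_self, Function.update_self]; positivity
    · subst hax; simpa [hbx, dist_comm, add_comm] using (hx b (hb'.resolve_left hbx)).2
    · subst hbx; simpa [hax] using (hx a (ha'.resolve_left hax)).2
    · simpa [hax, hbx] using t.ineq2 a (ha'.resolve_left hax) b (hb'.resolve_left hbx)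

theorem mem_orb_of_mem_orb_insert (t : Katetov D M) {x : M} (hxt : x ∉ t.dom) {d : ℝ}
    (hdD : d ∈ D) (hd : 0 < d)
    (hx : ∀ a ∈ t.dom, |t.f a - d| ≤ dist a x ∧ dist a x ≤ t.f a + d) {y : M}
    (hy : y ∈ orb (t.insert x d hdD hd hx)) : y ∈ orb t ∧ dist y x = d := by
  classical
  obtain ⟨hy_dom, hy_dist⟩ := hy
  have hxy : dist y x = d := by simpa [insert] using hy_dist x (Finset.mem_insert_self x t.dom)
  refine ⟨⟨fun h => hy_dom (Finset.mem_insert_of_mem h), fun a ha => ?_⟩, hxy⟩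
  have hax : a ≠ x := fun h => hxt (h ▸ ha)
  simpa [insert, hax] using hy_dist a (Finset.mem_insert_of_mem ha)

end Katetov

def IsAdmissibleDist (s t : Katetov D M) (d : ℝ) : Prop :=
  ∀ a ∈ s.dom, |s.f a - t.f a| ≤ d ∧ d ≤ s.f a + t.f a

theorem exists_mem_orb_dist_eq (hM : IsUrysohn D M) (h0 : (0 : ℝ) ∈ D) (s t : Katetov D M)
    (hst : t.dom = s.dom) {d : ℝ} (hdD : d ∈ D) (hd : 0 < d) (hadm : IsAdmissibleDist s t d) :
    ∃ x ∈ orb s, ∃ y ∈ orb t, dist x y = d := by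
  obtain ⟨x, hxs⟩ := s.orb_nonempty hM h0
  have hx : ∀ a ∈ t.dom, |t.f a - d| ≤ dist a x ∧ dist a x ≤ t.f a + d := by
    intro a ha
    rw [hst] at ha
    obtain ⟨h₁, h₂⟩ := hadm a ha
    obtain ⟨h₃, h₄⟩ := abs_le.1 h₁
    rw [dist_comm, hxs.2 a ha]
    exact ⟨abs_le.2 ⟨by linarith, by linarith⟩, by linarith⟩
  obtain ⟨y, hy⟩ := (t.insert x d hdD hd hx).orb_nonempty hM h0
  obtain ⟨hyt, hyx⟩ := t.mem_orb_of_mem_orb_insert (hst ▸ hxs.1) hdD hd hx hy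
  exact ⟨x, hxs, y, hyt, by rw [dist_comm, hyx]⟩

theorem IsUniversalDist.exists_isAdmissibleDist (hD : IsUniversalDist D)
    (hdist : ∀ x y : M, dist x y ∈ D) (s t : Katetov D M) (hst : t.dom = s.dom)
    (hne : s.dom.Nonempty) : ∃ d ∈ D, IsAdmissibleDist s t d := by
  obtain ⟨a₀, ha₀, ha₀max⟩ := s.dom.exists_max_image (fun a => |s.f a - t.f a|) hne
  obtain ⟨b₀, hb₀, hb₀min⟩ := s.dom.exists_min_image (fun a => s.f a + t.f a) hne
  have ha₀t : a₀ ∈ t.dom := hst ▸ ha₀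
  have hb₀t : b₀ ∈ t.dom := hst ▸ hb₀
  obtain ⟨d, hdD, -, ⟨h₁, h₂, -⟩, ⟨-, -, h₃⟩⟩ := hD.2.2.2 (dist a₀ b₀) _ _ _ _ (hdist a₀ b₀)
    (s.mem a₀ ha₀) (s.mem b₀ hb₀) (t.mem a₀ ha₀t) (t.mem b₀ hb₀t) (s.pos a₀ ha₀)
    (s.pos b₀ hb₀) (t.pos a₀ ha₀t) (t.pos b₀ hb₀t) (s.isMetricTriple ha₀ hb₀)
    (t.isMetricTriple ha₀t hb₀t)
  exact ⟨d, hdD, fun a ha =>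
    ⟨(ha₀max a ha).trans (abs_sub_le_iff.2 ⟨by linarith, by linarith⟩), h₃.trans (hb₀min a ha)⟩⟩

theorem IsUniversalDist.exists_isAdmissibleDist_ge (hD : IsUniversalDist D)
    (hdist : ∀ x y : M, dist x y ∈ D) (s t : Katetov D M) (hst : t.dom = s.dom) {c : ℝ}
    (hcD : c ∈ D) (hc : ∀ a ∈ s.dom, c ≤ s.f a + t.f a) :
    ∃ d ∈ D, c ≤ d ∧ IsAdmissibleDist s t d := by
  rcases s.dom.eq_empty_or_nonempty with hempty | hne
  · exact ⟨c, hcD, le_rfl, by simp [IsAdmissibleDist, hempty]⟩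
  obtain ⟨d, hdD, hd⟩ := hD.exists_isAdmissibleDist hdist s t hst hne
  refine ⟨max d c, ?_, le_max_right d c, fun a ha =>
    ⟨(hd a ha).1.trans (le_max_left d c), max_le (hd a ha).2 (hc a ha)⟩⟩
  rcases max_choice d c with h | h <;> rw [h]
  exacts [hdD, hcD]

theorem apply_zero_le_of_lt_succ {α : Type*} [Preorder α] {b : ℕ → α} {n : ℕ}
    (hb : ∀ i < n, b i < b (i + 1)) : ∀ j ≤ n, b 0 ≤ b j := by
  intro j
  induction j with
  | zero => exact fun _ => le_rfl
  | succ k ih => exact fun hk => (ih (by omega)).trans (hb k (by omega)).le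

theorem IsBlock.subset {B : Set ℝ} (hB : IsBlock D B) : B ⊆ D := by
  obtain ⟨n, b, rfl, hbD, -⟩ := hB
  rintro _ ⟨i, hi, rfl⟩
  exact hbD i hi

theorem IsBlock.pos {B : Set ℝ} (hB : IsBlock D B) {r : ℝ} (hr : r ∈ B) : 0 < r := by
  obtain ⟨n, b, rfl, -, hb0, hbinc, -⟩ := hB
  obtain ⟨i, hi, rfl⟩ := hr
  exact hb0.trans_le (apply_zero_le_of_lt_succ hbinc i hi)

theorem IsBlock.le_dpred_add {B : Set ℝ} (hB : IsBlock D B) (hfin : D.Finite)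
    (h0 : (0 : ℝ) ∈ D) {r c : ℝ} (hr : r ∈ B) (hc : c ∈ B) : r ≤ dpred D r + c := by
  obtain ⟨n, b, rfl, hbD, hb0, hbinc, -, -, hstep⟩ := hB
  obtain ⟨i, hi, rfl⟩ := hr
  obtain ⟨j, hj, rfl⟩ := hc
  have hbdd : BddAbove {s | s ∈ D ∧ s < b i} := (hfin.subset fun _ hs => hs.1).bddAbove
  have hb0j : b 0 ≤ b j := apply_zero_le_of_lt_succ hbinc j hj
  cases i with
  | zero =>
    have : 0 ≤ dpred D (b 0) := le_csSup hbdd ⟨h0, hb0⟩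
    linarith
  | succ k =>
    have : b k ≤ dpred D (b (k + 1)) := le_csSup hbdd ⟨hbD k (by omega), hbinc k (by omega)⟩
    linarith [hstep k (by omega)]

theorem statement14_general (D : Set ℝ) (hD : IsUniversalDist D)
    (B : Set ℝ) (hB : IsBlock D B) (h1B : (1 : ℝ) ∈ B)
    (M : Type) [MetricSpace M] (hM : IsUrysohn D M)
    (r : ℝ) (hrB : r ∈ B)
    (A : Finset M) (s t : Katetov D M) (hs : s.dom = A) (ht : t.dom = A)
    (hranks : dpred D r ≤ rank s) (hrankt : (1 : ℝ) ≤ rank t) :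
    ∃ x ∈ orb s, ∃ y ∈ orb t, r ≤ dist x y := by
  have hst : t.dom = s.dom := ht.trans hs.symm
  have hr : ∀ a ∈ s.dom, r ≤ s.f a + t.f a := fun a ha =>
    calc r ≤ dpred D r + 1 := hB.le_dpred_add hD.1 hD.2.1 hrB h1B
      _ ≤ s.f a + t.f a := add_le_add (hranks.trans (s.rank_le ha))
          (hrankt.trans (t.rank_le (hst ▸ ha)))
  obtain ⟨d, hdD, hrd, hd⟩ := hD.exists_isAdmissibleDist_ge hM.2.1 s t hst (hB.subset hrB) hr
  obtain ⟨x, hx, y, hy, hxy⟩ :=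
    exists_mem_orb_dist_eq hM hD.2.1 s t hst hdD ((hB.pos hrB).trans_le hrd) hd
  exact ⟨x, hx, y, hy, hxy ▸ hrd⟩

theorem statement14 (D : Set ℝ) (hD : IsUniversalDist D)
    (h1 : (1 : ℝ) ∈ D) (hmin : ∀ d ∈ D, 0 < d → (1 : ℝ) ≤ d)
    (B : Set ℝ) (hB : IsBlock D B) (h1B : (1 : ℝ) ∈ B)
    (M : Type) [MetricSpace M] (hM : IsUrysohn D M)
    (r : ℝ) (hrB : r ∈ B) (hpred1 : (1 : ℝ) ≤ dpred D r) (hpred2 : dpred D r < r)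
    (A : Finset M) (s t : Katetov D M) (hs : s.dom = A) (ht : t.dom = A)
    (hranks : dpred D r ≤ rank s) (hrankt : (1 : ℝ) ≤ rank t) :
    ∃ x ∈ orb s, ∃ y ∈ orb t, r ≤ dist x y :=
  statement14_general D hD B hB h1B M hM r hrB A s t hs ht hranks hrankt

end Sauer
end
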